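/- Let n ≥ 4 be even, let p₁,…,p_{n−1} be odd integers and p_n ≠ 0 an even integer, and let M be the symmetrized Seifert linking matrix of the pretzel knot P(p₁,…,p_n) as defined in the context. Then det M = sign(p₁⋯p_{n−1}) · σ_{n−1}(p₁,…,p_n) = sign(p₁⋯p_{n−1}) · Σ_{i=1}^{n} ∏_{j≠i} p_j. (Up to sign this is the determinant of the pretzel knot P(p₁,…,p_n).) -/

import Mathlib

open Matrix

/-- `esym p a b j` is the `j`-th elementary symmetric polynomial of the values
`p a, p (a+1), …, p (b-1)`; in the 1-indexed notation of the paper, where `p i`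
denotes `p_{i+1}`, this is `σ_j(p_{a+1},…,p_b)`. -/
def esym (p : ℕ → ℤ) (a b j : ℕ) : ℤ :=
  ∑ s ∈ (Finset.Ico a b).powersetCard j, ∏ i ∈ s, p i

/-- `sgn p i = s_{i+1} = -sign(p_{i+1})` in the 1-indexed notation of the paper. -/
def sgn (p : ℕ → ℤ) (i : ℕ) : ℤ := -(p i).sign

/-- Index type for the symmetrized Seifert linking matrix of the pretzel knot
`P(p₁,…,pₙ)` with `n` even: pairs `(i,k)` with `1 ≤ i ≤ n`, `1 ≤ k ≤ |p_i|−1`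
(0-indexed here), together with one extra index `γ = Sum.inr ()`.  Its cardinality
is `N = ρ₁+⋯+ρₙ+1` where `ρ_i = |p_i|−1`. -/
abbrev QIdx (n : ℕ) (p : ℕ → ℤ) : Type :=
  (Σ i : Fin n, Fin ((p i).natAbs - 1)) ⊕ Unit

/-- Entries of the symmetrized Seifert linking matrix `M` of `P(p₁,…,pₙ)` (`n` even):
`M[(i,k),(i,k)] = 2s_i`, `M[(i,k),(i,l)] = s_i` for `k ≠ l`, `M[(i,k),(j,l)] = 0` for
`i ≠ j`, `M[(i,k),γ] = M[γ,(i,k)] = s_i`, `M[γ,γ] = s₁+⋯+sₙ`. -/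
def linkEf (n : ℕ) (p : ℕ → ℤ) : QIdx n p → QIdx n p → ℤ
  | Sum.inl ⟨i, k⟩, Sum.inl ⟨j, l⟩ =>
      if (i : ℕ) = (j : ℕ) then (if (k : ℕ) = (l : ℕ) then 2 * sgn p i else sgn p i) else 0
  | Sum.inl ⟨i, _⟩, Sum.inr _ => sgn p i
  | Sum.inr _, Sum.inl ⟨i, _⟩ => sgn p i
  | Sum.inr _, Sum.inr _ => ∑ i ∈ Finset.range n, sgn p i

/-- The symmetrized Seifert linking matrix of the pretzel knot `P(p₁,…,pₙ)`, `n` even. -/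
def linkE (n : ℕ) (p : ℕ → ℤ) : Matrix (QIdx n p) (QIdx n p) ℤ :=
  Matrix.of (linkEf n p)


namespace Stmt12Aux
open Finset

variable (n : ℕ) (p : ℕ → ℤ)

abbrev Idx := Σ i : Fin n, Fin ((p i).natAbs - 1)

/-- s_i as a rational. -/
noncomputable def S (i : ℕ) : ℚ := ((sgn p i : ℤ) : ℚ)
/-- |p_i| as a rational. -/
noncomputable def q (i : ℕ) : ℚ := (((p i).natAbs : ℕ) : ℚ)

noncomputable def A : Matrix (Idx n p) (Idx n p) ℚ :=
  Matrix.of fun x y => ((linkEf n p (Sum.inl x) (Sum.inl y) : ℤ) : ℚ)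
noncomputable def B : Matrix (Idx n p) Unit ℚ :=
  Matrix.of fun x _ => S p x.1
noncomputable def C : Matrix Unit (Idx n p) ℚ :=
  Matrix.of fun _ y => S p y.1
noncomputable def D : Matrix Unit Unit ℚ :=
  Matrix.of fun _ _ => ∑ i : Fin n, S p i

lemma linkE_map_eq :
    (linkE n p).map ((↑) : ℤ → ℚ) = fromBlocks (A n p) (B n p) (C n p) (D n p) := by
  ext x y
  rcases x with ⟨i, k⟩ | x <;> rcases y with ⟨j, l⟩ | y <;>
    simp [linkE, A, B, C, D, S, linkEf, Matrix.map, fromBlocks]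
  exact (Fin.sum_univ_eq_sum_range (fun i => ((sgn p i : ℤ) : ℚ)) n).symm


noncomputable def A' : Matrix (Idx n p) (Idx n p) ℚ :=
  Matrix.of fun x y =>
    if (x.1 : ℕ) = (y.1 : ℕ) then
      S p x.1 * ((if (x.2 : ℕ) = (y.2 : ℕ) then 1 else 0) - 1 / q p x.1)
    else 0

noncomputable def X : Matrix (Idx n p) (Fin n) ℚ :=
  Matrix.of fun x j => if x.1 = j then S p j else 0
noncomputable def Y : Matrix (Fin n) (Idx n p) ℚ :=
  Matrix.of fun j y => if y.1 = j then 1 else 0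

variable {n p}

lemma sgn_sq (i : ℕ) (hi : p i ≠ 0) : sgn p i * sgn p i = 1 := by
  unfold sgn
  rcases hi.lt_or_gt with h | h
  · rw [Int.sign_eq_neg_one_iff_neg.mpr h]; norm_num
  · rw [Int.sign_eq_one_iff_pos.mpr h]; norm_num

lemma S_sq (i : ℕ) (hi : p i ≠ 0) : S p i * S p i = 1 := by
  unfold S; exact_mod_cast congrArg (fun z : ℤ => (z : ℚ)) (sgn_sq i hi)

lemma q_eq (i : ℕ) (hi : p i ≠ 0) :
    q p i = (((p i).natAbs - 1 : ℕ) : ℚ) + 1 := by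
  unfold q
  have h : (p i).natAbs - 1 + 1 = (p i).natAbs :=
    Nat.succ_pred_eq_of_pos (Int.natAbs_pos.mpr hi)
  exact_mod_cast h.symm

lemma q_ne (i : ℕ) (hi : p i ≠ 0) : q p i ≠ 0 := by
  unfold q
  simpa using Int.natAbs_ne_zero.mpr hi

lemma A_mul_A' (hp : ∀ i : Fin n, p (i : ℕ) ≠ 0) : A n p * A' n p = 1 := by
  ext ⟨i, k⟩ ⟨j, l⟩
  rw [Matrix.mul_apply, ← Finset.univ_sigma_univ, Finset.sum_sigma]
  rw [Finset.sum_eq_single i (fun a _ ha => Finset.sum_eq_zero fun t _ => by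
    simp [A, A', linkEf, (Fin.val_ne_iff).mpr (Ne.symm ha)]) (by simp)]
  by_cases hij : (i : ℕ) = (j : ℕ)
  · have hij' : i = j := Fin.ext hij
    subst hij'
    have hS := S_sq (p := p) (i : ℕ) (hp i)
    have hS2 : ((p (i : ℕ)).sign : ℚ) ^ 2 = 1 := by
      have h := sgn_sq (p := p) (i : ℕ) (hp i)
      rw [sgn, neg_mul_neg, ← sq] at h
      exact_mod_cast congrArg (fun z : ℤ => (z : ℚ)) h
    have key : ∀ t : Fin ((p (i : ℕ)).natAbs - 1),
        A n p ⟨i, k⟩ ⟨i, t⟩ * A' n p ⟨i, t⟩ ⟨i, l⟩ =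
        (S p i * S p i) * ((if t = l then (1:ℚ) else 0)
          + (if k = t then (if t = l then (1:ℚ) else 0) else 0)
          - 1 / q p i - (if k = t then 1 / q p i else 0)) := by
      intro t
      show ((linkEf n p _ _ : ℤ) : ℚ) * _ = _
      by_cases h1 : k = t <;> by_cases h2 : t = l
      · have h3 : k = l := h1.trans h2
        simp [A', linkEf, Fin.val_eq_val, sgn, S, h1, h2, h3, hS2] <;> ring
      · have h3 : ¬ k = l := fun hh => h2 (h1.symm.trans hh)
        simp [A', linkEf, Fin.val_eq_val, sgn, S, h1, h2, h3, hS2] <;> ring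
      · have h3 : ¬ k = l := fun hh => h1 (hh.trans h2.symm)
        simp [A', linkEf, Fin.val_eq_val, sgn, S, h1, h2, h3, hS2] <;> ring
      · simp [A', linkEf, Fin.val_eq_val, sgn, S, h1, h2, hS2] <;> ring
    rw [Finset.sum_congr rfl fun t _ => key t, ← Finset.mul_sum, hS, one_mul]
    rw [Finset.sum_sub_distrib, Finset.sum_sub_distrib, Finset.sum_add_distrib]
    rw [Finset.sum_ite_eq' Finset.univ l (fun _ => (1:ℚ)),
      Finset.sum_ite_eq Finset.univ k (fun t => if t = l then (1:ℚ) else 0),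
      Finset.sum_ite_eq Finset.univ k (fun _ => 1 / q p i)]
    simp only [Finset.mem_univ, if_true, Finset.sum_const, Finset.card_univ,
      Fintype.card_fin, nsmul_eq_mul]
    have hqv := q_eq (p := p) (i : ℕ) (hp i)
    have hq1 : (((p (i : ℕ)).natAbs - 1 : ℕ) : ℚ) + 1 ≠ 0 := by positivity
    rw [Matrix.one_apply]
    by_cases hkl : k = l
    · subst hkl
      rw [if_pos rfl, if_pos rfl, hqv]
      field_simp
      ring
    · rw [if_neg hkl, if_neg (by simp [hkl]), hqv]
      field_simp
      ring
  · have hz : ∀ t, A n p ⟨i, k⟩ ⟨i, t⟩ * A' n p ⟨i, t⟩ ⟨j, l⟩ = 0 := fun t => by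
      simp [A', hij]
    rw [Finset.sum_eq_zero fun t _ => hz t,
      Matrix.one_apply_ne (fun h => hij (congrArg (fun x : Idx n p => (x.1 : ℕ)) h))]


lemma A_transpose : (A n p)ᵀ = A n p := by
  ext ⟨i, k⟩ ⟨j, l⟩
  show ((linkEf n p (Sum.inl ⟨j, l⟩) (Sum.inl ⟨i, k⟩) : ℤ) : ℚ) = _
  by_cases h : (i : ℕ) = (j : ℕ)
  · have hij : i = j := Fin.ext h
    subst hij
    by_cases hkl : (k : ℕ) = (l : ℕ) <;> simp [linkEf, A, hkl, eq_comm]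
  · simp [linkEf, A, h, Ne.symm h]

lemma A'_transpose : (A' n p)ᵀ = A' n p := by
  ext ⟨i, k⟩ ⟨j, l⟩
  show A' n p ⟨j, l⟩ ⟨i, k⟩ = _
  by_cases h : (i : ℕ) = (j : ℕ)
  · have hij : i = j := Fin.ext h
    subst hij
    by_cases hkl : (k : ℕ) = (l : ℕ) <;> simp [A', hkl, eq_comm]
  · simp [A', h, Ne.symm h]

lemma A'_mul_A (hp : ∀ i : Fin n, p (i : ℕ) ≠ 0) : A' n p * A n p = 1 := by
  have h := congrArg Matrix.transpose (A_mul_A' hp)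
  rwa [Matrix.transpose_mul, A_transpose, A'_transpose, Matrix.transpose_one] at h

noncomputable def invA (hp : ∀ i : Fin n, p (i : ℕ) ≠ 0) : Invertible (A n p) :=
  ⟨A' n p, A'_mul_A hp, A_mul_A' hp⟩

lemma A_decomp : A n p = Matrix.diagonal (fun x : Idx n p => S p x.1) + X n p * Y n p := by
  ext ⟨i, k⟩ ⟨j, l⟩
  rw [Matrix.add_apply, Matrix.mul_apply, Finset.sum_eq_single i
    (fun a _ ha => by simp [X, Y, Ne.symm ha]) (by simp)]
  by_cases h : (i : ℕ) = (j : ℕ)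
  · have hij : i = j := Fin.ext h
    subst hij
    by_cases hkl : k = l
    · subst hkl
      simp [A, linkEf, X, Y, S, Matrix.diagonal_apply]
      ring
    · simp [A, linkEf, X, Y, S, Matrix.diagonal_apply, hkl, Fin.val_eq_val]
  · have hij : i ≠ j := fun e => h (by rw [e])
    have hmk : (⟨i, k⟩ : Idx n p) ≠ ⟨j, l⟩ := fun hh => hij (congrArg Sigma.fst hh)
    simp [A, linkEf, X, Y, Matrix.diagonal_apply, h, hij, Ne.symm hij, hmk]

lemma det_A (hp : ∀ i : Fin n, p (i : ℕ) ≠ 0) :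
    (A n p).det =
      (∏ i : Fin n, S p i ^ ((p (i : ℕ)).natAbs - 1)) * ∏ i : Fin n, q p i := by
  set Dg : Idx n p → ℚ := fun x => S p x.1 with hDg
  have hDD : Matrix.diagonal Dg * Matrix.diagonal Dg = 1 := by
    rw [Matrix.diagonal_mul_diagonal]
    have : (fun x : Idx n p => Dg x * Dg x) = fun _ => (1 : ℚ) := by
      funext x
      exact S_sq (x.1 : ℕ) (hp x.1)
    rw [this, Matrix.diagonal_one]
  have hA : A n p = Matrix.diagonal Dg * (1 + Matrix.diagonal Dg * X n p * Y n p) := by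
    rw [Matrix.mul_add, Matrix.mul_one, ← Matrix.mul_assoc, ← Matrix.mul_assoc, hDD,
      Matrix.one_mul, ← A_decomp]
  rw [hA, Matrix.det_mul, Matrix.det_diagonal, Matrix.det_one_add_mul_comm]
  have h2 : (1 : Matrix (Fin n) (Fin n) ℚ) + Y n p * (Matrix.diagonal Dg * X n p)
      = Matrix.diagonal (fun i : Fin n => q p (i : ℕ)) := by
    ext a b
    have hsum : ∑ x : Idx n p, Y n p a x * (Matrix.diagonal Dg * X n p) x b
        = if a = b then ((((p (a : ℕ)).natAbs - 1 : ℕ) : ℚ)) else 0 := by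
      rw [← Finset.univ_sigma_univ, Finset.sum_sigma]
      rw [Finset.sum_eq_single a (fun c _ hc => Finset.sum_eq_zero fun t _ => by
        simp [Y, hc]) (by simp)]
      by_cases hab : a = b
      · subst hab
        have : ∀ t : Fin ((p (a : ℕ)).natAbs - 1),
            Y n p a ⟨a, t⟩ * (Matrix.diagonal Dg * X n p) ⟨a, t⟩ a = 1 := fun t => by
          rw [Matrix.diagonal_mul]
          simp [Y, X, hDg]
          exact S_sq (a : ℕ) (hp a)
        rw [Finset.sum_congr rfl fun t _ => this t]
        simp
      · have : ∀ t : Fin ((p (a : ℕ)).natAbs - 1),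
            Y n p a ⟨a, t⟩ * (Matrix.diagonal Dg * X n p) ⟨a, t⟩ b = 0 := fun t => by
          rw [Matrix.diagonal_mul]
          simp [Y, X, hab]
        rw [Finset.sum_congr rfl fun t _ => this t]
        simp [hab]
    rw [Matrix.add_apply, Matrix.mul_apply, hsum, Matrix.one_apply, Matrix.diagonal_apply]
    by_cases hab : a = b
    · subst hab
      simp [q_eq (a : ℕ) (hp a)]
      ring
    · simp [hab]
  rw [h2, Matrix.det_diagonal]
  congr 1
  rw [← Finset.univ_sigma_univ, Finset.prod_sigma]
  simp [hDg, Finset.prod_const]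


lemma CA'_entry (hp : ∀ i : Fin n, p (i : ℕ) ≠ 0) (j : Fin n)
    (l : Fin ((p (j : ℕ)).natAbs - 1)) :
    (C n p * A' n p) () ⟨j, l⟩ = 1 / q p (j : ℕ) := by
  rw [Matrix.mul_apply, ← Finset.univ_sigma_univ, Finset.sum_sigma]
  rw [Finset.sum_eq_single j (fun c _ hc => Finset.sum_eq_zero fun t _ => by
    simp [A', C, Fin.val_ne_iff.mpr hc]) (by simp)]
  have key : ∀ t : Fin ((p (j : ℕ)).natAbs - 1),
      C n p () ⟨j, t⟩ * A' n p ⟨j, t⟩ ⟨j, l⟩ =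
      (if t = l then (1 : ℚ) else 0) - 1 / q p (j : ℕ) := by
    intro t
    have hS : S p (j : ℕ) ^ 2 = 1 := by rw [sq]; exact S_sq (p := p) (j : ℕ) (hp j)
    by_cases htl : t = l <;>
      simp [C, A', htl, Fin.val_eq_val] <;> ring_nf <;> rw [hS] <;> ring
  rw [Finset.sum_congr rfl fun t _ => key t, Finset.sum_sub_distrib,
    Finset.sum_ite_eq' Finset.univ l (fun _ => (1 : ℚ))]
  simp only [Finset.mem_univ, if_true, Finset.sum_const, Finset.card_univ,
    Fintype.card_fin, nsmul_eq_mul]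
  have hqv := q_eq (p := p) (j : ℕ) (hp j)
  have hq1 : (((p (j : ℕ)).natAbs - 1 : ℕ) : ℚ) + 1 ≠ 0 := by positivity
  rw [hqv]
  field_simp
  ring

lemma schur (hp : ∀ i : Fin n, p (i : ℕ) ≠ 0) :
    D n p - C n p * A' n p * B n p =
      Matrix.of fun _ _ : Unit => ∑ i : Fin n, (S p (i : ℕ) / q p (i : ℕ)) *
        (q p (i : ℕ) - (((p (i : ℕ)).natAbs - 1 : ℕ) : ℚ)) := by
  ext x y
  rw [Matrix.sub_apply, Matrix.mul_apply]
  have : ∀ y' : Idx n p, (C n p * A' n p) () y' * B n p y' () =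
      (1 / q p (y'.1 : ℕ)) * S p (y'.1 : ℕ) := by
    rintro ⟨j, l⟩
    rw [CA'_entry hp j l]
    rfl
  rw [Finset.sum_congr rfl fun y' _ => this y', ← Finset.univ_sigma_univ, Finset.sum_sigma]
  simp only [Finset.sum_const, Finset.card_univ, Fintype.card_fin, nsmul_eq_mul]
  show (∑ i : Fin n, S p (i : ℕ)) - _ = _
  rw [← Finset.sum_sub_distrib]
  refine Finset.sum_congr rfl fun i _ => ?_
  have hq := q_ne (p := p) (i : ℕ) (hp i)
  field_simp

lemma det_linkE_Q (hp : ∀ i : Fin n, p (i : ℕ) ≠ 0) :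
    ((linkE n p).det : ℚ) =
      ((∏ i : Fin n, S p (i : ℕ) ^ ((p (i : ℕ)).natAbs - 1)) * ∏ i : Fin n, q p (i : ℕ)) *
        ∑ i : Fin n, (S p (i : ℕ) / q p (i : ℕ)) *
          (q p (i : ℕ) - (((p (i : ℕ)).natAbs - 1 : ℕ) : ℚ)) := by
  have h0 : ((linkE n p).det : ℚ) = ((linkE n p).map ((↑) : ℤ → ℚ)).det := by
    exact RingHom.map_det (Int.castRingHom ℚ) (linkE n p)
  rw [h0, linkE_map_eq]
  haveI := invA hp
  rw [Matrix.det_fromBlocks₁₁, invOf_eq_right_inv (A_mul_A' hp), det_A hp, schur hp,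
    Matrix.det_unique]
  rfl


lemma sign_sq (i : ℕ) (hi : p i ≠ 0) : ((p i).sign : ℚ) * ((p i).sign : ℚ) = 1 := by
  have h := sgn_sq (p := p) i hi
  rw [sgn, neg_mul_neg] at h
  exact_mod_cast congrArg (fun z : ℤ => (z : ℚ)) h

lemma term_eq (i : ℕ) (hi : p i ≠ 0) :
    (S p i / q p i) * (q p i - (((p i).natAbs - 1 : ℕ) : ℚ)) = -(1 / ((p i : ℤ) : ℚ)) := by
  have hqv := q_eq i hi
  have hq := q_ne i hi
  have hs2 := sign_sq i hi
  have hpc : ((p i : ℤ) : ℚ) = ((p i).sign : ℚ) * q p i := by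
    unfold q
    rw [Nat.cast_natAbs]
    exact_mod_cast (Int.sign_mul_abs (p i)).symm
  have hp0 : ((p i : ℤ) : ℚ) ≠ 0 := Int.cast_ne_zero.mpr hi
  have h1 : q p i - (((p i).natAbs - 1 : ℕ) : ℚ) = 1 := by rw [hqv]; ring
  rw [h1, mul_one]
  unfold S sgn
  push_cast
  rw [neg_div, neg_inj, div_eq_div_iff hq hp0]
  linear_combination ((p i).sign : ℚ) * hpc + q p i * hs2

def eps (n : ℕ) (p : ℕ → ℤ) (j : ℕ) : ℤ := if j = n - 1 then -1 else (p j).sign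

lemma S_pow_even {i : ℕ} (hi : p i ≠ 0) {m : ℕ} (hm : Even m) : S p i ^ m = 1 := by
  obtain ⟨t, ht⟩ := hm
  rw [ht, pow_add, ← mul_pow, S_sq i hi, one_pow]

lemma F_eq (hpodd : ∀ i, i < n - 1 → Odd (p i)) (hpeven : Even (p (n - 1)))
    (hpne : p (n - 1) ≠ 0) (i : Fin n) :
    S p (i : ℕ) ^ ((p (i : ℕ)).natAbs - 1) * q p (i : ℕ) =
      ((eps n p (i : ℕ) : ℤ) : ℚ) * ((p (i : ℕ) : ℤ) : ℚ) := by
  have hile : (i : ℕ) < n := i.2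
  by_cases hlast : (i : ℕ) = n - 1
  · have hev : Even ((p (i : ℕ)).natAbs) := Int.natAbs_even.mpr (by rw [hlast]; exact hpeven)
    have hne : p (i : ℕ) ≠ 0 := by rw [hlast]; exact hpne
    have h1 : 1 ≤ (p (i : ℕ)).natAbs := Nat.one_le_iff_ne_zero.mpr (Int.natAbs_ne_zero.mpr hne)
    obtain ⟨t, ht⟩ := Nat.Even.sub_odd h1 hev odd_one
    have hspow : S p (i : ℕ) ^ ((p (i : ℕ)).natAbs - 1) = S p (i : ℕ) := by
      rw [ht, pow_succ, pow_mul, sq, S_sq (i : ℕ) hne, one_pow, one_mul]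
    rw [hspow, eps, if_pos hlast]
    have hz : ((p (i : ℕ)).sign : ℚ) * |((p (i : ℕ) : ℤ) : ℚ)| = ((p (i : ℕ) : ℤ) : ℚ) := by
      exact_mod_cast congrArg (fun z : ℤ => (z : ℚ)) (Int.sign_mul_abs (p (i : ℕ)))
    unfold S q sgn
    rw [Nat.cast_natAbs]
    push_cast
    linear_combination -hz
  · have hlt : (i : ℕ) < n - 1 := by omega
    have hodd := hpodd _ hlt
    have hne : p (i : ℕ) ≠ 0 := by
      intro h0
      rw [h0] at hodd
      exact (Int.not_odd_iff_even.mpr Even.zero) hodd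
    have hoddn : Odd ((p (i : ℕ)).natAbs) := Int.natAbs_odd.mpr hodd
    have hevr : Even ((p (i : ℕ)).natAbs - 1) := Nat.Odd.sub_odd hoddn odd_one
    rw [S_pow_even hne hevr, one_mul, eps, if_neg hlast]
    have hs2 := sign_sq (p := p) (i : ℕ) hne
    have hz : ((p (i : ℕ)).sign : ℚ) * |((p (i : ℕ) : ℤ) : ℚ)| = ((p (i : ℕ) : ℤ) : ℚ) := by
      exact_mod_cast congrArg (fun z : ℤ => (z : ℚ)) (Int.sign_mul_abs (p (i : ℕ)))
    unfold q
    rw [Nat.cast_natAbs]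
    push_cast
    linear_combination ((p (i : ℕ)).sign : ℚ) * hz - |((p (i : ℕ) : ℤ) : ℚ)| * hs2

def signHom : ℤ →* ℤ where
  toFun := Int.sign
  map_one' := rfl
  map_mul' := Int.sign_mul

lemma prod_eps (hn4 : 4 ≤ n) :
    ∏ i ∈ Finset.range n, eps n p i = -(∏ i ∈ Finset.range (n - 1), p i).sign := by
  obtain ⟨m, hm⟩ : ∃ m, n = m + 1 := ⟨n - 1, by omega⟩
  subst hm
  have hml : m + 1 - 1 = m := by omega
  rw [hml, Finset.prod_range_succ]
  have h1 : eps (m + 1) p m = -1 := by rw [eps, hml, if_pos rfl]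
  have h2 : ∀ j ∈ Finset.range m, eps (m + 1) p j = signHom (p j) := by
    intro j hj
    rw [eps, hml, if_neg (Nat.ne_of_lt (Finset.mem_range.mp hj))]
    rfl
  rw [h1, Finset.prod_congr rfl h2, ← map_prod signHom p (Finset.range m)]
  show (∏ i ∈ Finset.range m, p i).sign * (-1) = _
  ring

end Stmt12Aux

lemma esym_eq (p : ℕ → ℤ) (n : ℕ) (hn : 1 ≤ n) :
    esym p 0 n (n - 1) = ∑ i ∈ Finset.range n, ∏ j ∈ (Finset.range n).erase i, p j := by
  unfold esym
  rw [show Finset.Ico 0 n = Finset.range n by rw [Finset.range_eq_Ico]]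
  refine (Finset.sum_bij (fun (i : ℕ) (hi : i ∈ Finset.range n) => (Finset.range n).erase i)
    ?_ ?_ ?_ ?_).symm
  · intro i hi
    rw [Finset.mem_powersetCard]
    exact ⟨Finset.erase_subset _ _, by
      rw [Finset.card_erase_of_mem hi, Finset.card_range]⟩
  · intro i hi j hj h
    by_contra hne
    have : j ∈ (Finset.range n).erase i := Finset.mem_erase.mpr ⟨Ne.symm hne, hj⟩
    rw [h] at this
    exact (Finset.mem_erase.mp this).1 rfl
  · intro s hs
    rw [Finset.mem_powersetCard] at hs
    obtain ⟨hsub, hcard⟩ := hs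
    have hpos : 0 < (Finset.range n \ s).card := by
      rw [Finset.card_sdiff_of_subset hsub, hcard, Finset.card_range]; omega
    obtain ⟨i, hi'⟩ := Finset.card_pos.mp hpos
    rw [Finset.mem_sdiff] at hi'
    obtain ⟨hi, his⟩ := hi'
    refine ⟨i, hi, ?_⟩
    have hsub2 : s ⊆ (Finset.range n).erase i := fun x hx =>
      Finset.mem_erase.mpr ⟨fun e => his (e ▸ hx), hsub hx⟩
    exact (Finset.eq_of_subset_of_card_le hsub2 (by
      rw [Finset.card_erase_of_mem hi, Finset.card_range, hcard])).symm
  · intro i hi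
    rfl


/-- `det M = sign(p₁⋯p_{n−1})·σ_{n−1}(p₁,…,pₙ)
           = sign(p₁⋯p_{n−1})·Σ_{i=1}^{n} ∏_{j≠i} p_j`. -/
theorem stmt12 (n : ℕ) (hn : 4 ≤ n) (heven : Even n) (p : ℕ → ℤ)
    (hpodd : ∀ i, i < n - 1 → Odd (p i)) (hpeven : Even (p (n - 1)))
    (hpne : p (n - 1) ≠ 0) :
    (linkE n p).det = (∏ i ∈ Finset.range (n - 1), p i).sign * esym p 0 n (n - 1) ∧
      (linkE n p).det = (∏ i ∈ Finset.range (n - 1), p i).sign *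
        ∑ i ∈ Finset.range n, ∏ j ∈ (Finset.range n).erase i, p j := by
  have hp : ∀ i : Fin n, p (i : ℕ) ≠ 0 := by
    intro i
    by_cases h : (i : ℕ) = n - 1
    · rw [h]; exact hpne
    · have hodd := hpodd (i : ℕ) (by have := i.2; omega)
      intro h0
      rw [h0] at hodd
      exact (Int.not_odd_iff_even.mpr Even.zero) hodd
  have h2 : (linkE n p).det = (∏ i ∈ Finset.range (n - 1), p i).sign *
      ∑ i ∈ Finset.range n, ∏ j ∈ (Finset.range n).erase i, p j := by
    have key : ((linkE n p).det : ℚ) = (((∏ i ∈ Finset.range (n - 1), p i).sign *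
        ∑ i ∈ Finset.range n, ∏ j ∈ (Finset.range n).erase i, p j : ℤ) : ℚ) := by
      rw [Stmt12Aux.det_linkE_Q hp]
      rw [Finset.sum_congr rfl (fun (i : Fin n) (_ : i ∈ Finset.univ) =>
        Stmt12Aux.term_eq (p := p) (i : ℕ) (hp i))]
      rw [← Finset.prod_mul_distrib]
      rw [Finset.prod_congr rfl (fun (i : Fin n) (_ : i ∈ Finset.univ) =>
        Stmt12Aux.F_eq hpodd hpeven hpne i)]
      rw [Finset.prod_mul_distrib]
      have ha : (∏ i : Fin n, ((Stmt12Aux.eps n p (i : ℕ) : ℤ) : ℚ))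
          = -(((∏ i ∈ Finset.range (n - 1), p i).sign : ℤ) : ℚ) := by
        rw [Fin.prod_univ_eq_prod_range (fun i => ((Stmt12Aux.eps n p i : ℤ) : ℚ)) n]
        have h := Stmt12Aux.prod_eps (p := p) hn
        exact_mod_cast congrArg (fun z : ℤ => (z : ℚ)) h
      have hb : (∏ i : Fin n, ((p (i : ℕ) : ℤ) : ℚ)) = ∏ i ∈ Finset.range n, ((p i : ℤ) : ℚ) :=
        Fin.prod_univ_eq_prod_range (fun i => ((p i : ℤ) : ℚ)) n
      rw [ha, hb, Fin.sum_univ_eq_sum_range (fun i => -(1 / ((p i : ℤ) : ℚ))) n]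
      push_cast
      rw [Finset.mul_sum, Finset.mul_sum]
      refine Finset.sum_congr rfl fun i hi => ?_
      have hi' : i < n := Finset.mem_range.mp hi
      have hpi : p i ≠ 0 := hp ⟨i, hi'⟩
      have hpi0 : ((p i : ℤ) : ℚ) ≠ 0 := Int.cast_ne_zero.mpr hpi
      have herase : (∏ j ∈ (Finset.range n).erase i, ((p j : ℤ) : ℚ)) * ((p i : ℤ) : ℚ)
          = ∏ j ∈ Finset.range n, ((p j : ℤ) : ℚ) :=
        Finset.prod_erase_mul _ _ hi
      field_simp
      linear_combination (-(((∏ i ∈ Finset.range (n - 1), p i).sign : ℤ) : ℚ)) * herase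
    exact_mod_cast key
  exact ⟨by rw [esym_eq p n (by omega)]; exact h2, h2⟩
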